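/- Let A be the Artin group on two generators a, b with relation aba⋯ = bab⋯ (each side an alternating word of length m), where 2 < m < ∞, and let δ = aba⋯ be the alternating word of length m in a and b (the Garside element). Then the centre of A is infinite cyclic; it is generated by δ if m is even, and by δ² if m is odd. -/

import Mathlib

/-- The alternating word `sts⋯` of length `k` in the free group on `S`. -/
def braidWord {S : Type*} (k : ℕ) (s t : S) : FreeGroup S :=
  ((List.range k).map fun i => FreeGroup.of (if i % 2 = 0 then s else t)).prod

/-- The braid relations of the Artin group with Coxeter-type matrix `M`
(`M s t = ⊤` means no relation). -/
def artinRels {S : Type*} (M : S → S → ℕ∞) : Set (FreeGroup S) :=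
  { r | ∃ s t : S, s ≠ t ∧ ∃ k : ℕ, M s t = (k : ℕ∞) ∧
      r = braidWord k s t * (braidWord k t s)⁻¹ }

/-- The Artin group associated to the matrix `M`. -/
abbrev ArtinGroup {S : Type*} (M : S → S → ℕ∞) : Type _ := PresentedGroup (artinRels M)

/-- The standard parabolic subgroup `A_X` generated by the images of elements of `X ⊆ S`. -/
def StandardParabolic {S : Type*} (M : S → S → ℕ∞) (X : Set S) : Subgroup (ArtinGroup M) :=
  Subgroup.closure ((fun s => (PresentedGroup.of s : ArtinGroup M)) '' X)

/-- The conjugate `g H g⁻¹` of a subgroup. -/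
def conjSubgroup {G : Type*} [Group G] (g : G) (H : Subgroup G) : Subgroup G :=
  H.map (MulAut.conj g).toMonoidHom

/-- A parabolic subgroup: a conjugate of a standard parabolic subgroup. -/
def IsParabolic {S : Type*} (M : S → S → ℕ∞) (P : Subgroup (ArtinGroup M)) : Prop :=
  ∃ (g : ArtinGroup M) (X : Set S), P = conjSubgroup g (StandardParabolic M X)

/-- The dihedral Artin group `⟨a, b | aba⋯ = bab⋯⟩` with coefficient `m`, realised as
the Artin group on the two-element set `Bool` (with `a` the image of `true` and
`b` the image of `false`). -/
abbrev DihedralArtin (m : ℕ) : Type :=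
  ArtinGroup (fun s t : Bool => if s = t then 1 else (m : ℕ∞))

/-- The generator `a` of the dihedral Artin group. -/
def dihedralA (m : ℕ) : DihedralArtin m := PresentedGroup.of true

/-- The generator `b` of the dihedral Artin group. -/
def dihedralB (m : ℕ) : DihedralArtin m := PresentedGroup.of false

/-- The Garside element `δ = aba⋯` (alternating word of length `m` starting with `a`)
of the dihedral Artin group with coefficient `m`. -/
def garsideElt (m : ℕ) : DihedralArtin m :=
  ((List.range m).map fun i => if i % 2 = 0 then dihedralA m else dihedralB m).prod

/-!
Write `z` for `δ` (`m = 2k`) or `δ²` (`m` odd) and `N` for `k`, resp. `m`. Then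
`z = (ab)^N = (ba)^N`, so `z` commutes with `a` and `b`, and the length homomorphism `A → ℤ`
sends `z` to `2N ≠ 0`, so `z` has infinite order.

For the reverse inclusion, `A/⟨z⟩` is a free product of two nontrivial cyclic groups:
`ℤ ∗ ℤ/k`, freely generated by the images of `a` and `ab`, if `m = 2k`, and `ℤ/2 ∗ ℤ/m`,
freely generated by the images of `δ` and `ab`, if `m` is odd. A free product of two nontrivial
groups has trivial centre: for a central `g` with reduced word `w`, the words of `u g` and `g u`
for a suitable letter `u` (a letter outside the factor of the first letter of `w`, or the inverse
of that first letter) are reduced and start in different factors. Hence the image of the centre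
of `A` in `A/⟨z⟩` is trivial.
-/

section AltWord

variable {G : Type*} [Monoid G] (x y : G)

def altWord (k : ℕ) : G := ((List.range k).map fun i => if i % 2 = 0 then x else y).prod

@[simp]
theorem altWord_zero : altWord x y 0 = 1 := rfl

theorem altWord_succ (k : ℕ) : altWord x y (k + 1) = x * altWord y x k := by
  simp only [altWord, List.range_succ_eq_map, List.map_cons, List.prod_cons, List.map_map]
  congr 2
  refine List.map_congr_left fun i _ => ?_
  rcases Nat.mod_two_eq_zero_or_one i with h | h <;> simp [Nat.succ_mod_two_eq_zero_iff, h]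

theorem altWord_two_mul (k : ℕ) : altWord x y (2 * k) = (x * y) ^ k := by
  induction k with
  | zero => simp
  | succ k ih => rw [Nat.mul_succ, altWord_succ, altWord_succ, ih, ← mul_assoc, ← pow_succ']

theorem altWord_two_mul_add_one (k : ℕ) : altWord x y (2 * k + 1) = (x * y) ^ k * x := by
  rw [altWord_succ, altWord_two_mul, (SemiconjBy.pow_right (mul_assoc x y x).symm k).eq]

theorem altWord_mul_altWord_of_odd {n : ℕ} (hn : Odd n) :
    altWord x y n * altWord y x n = (x * y) ^ n := by
  obtain ⟨k, rfl⟩ := hn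
  calc altWord x y (2 * k + 1) * altWord y x (2 * k + 1)
      = (x * y) ^ k * (x * (y * x) ^ k) * y := by
        simp only [altWord_two_mul_add_one, mul_assoc]
    _ = (x * y) ^ (2 * k + 1) := by
        rw [(SemiconjBy.pow_right (mul_assoc x y x).symm k).eq, pow_succ, two_mul, pow_add]
        simp only [mul_assoc]

theorem map_altWord {H : Type*} [Monoid H] (f : G →* H) (k : ℕ) :
    f (altWord x y k) = altWord (f x) (f y) k := by
  simp only [altWord, map_list_prod, List.map_map, Function.comp_def, apply_ite f]

end AltWord

theorem braidWord_eq_altWord {S : Type*} (k : ℕ) (s t : S) :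
    braidWord k s t = altWord (FreeGroup.of s) (FreeGroup.of t) k :=
  congrArg List.prod (List.map_congr_left fun _ _ => apply_ite FreeGroup.of _ s t)

namespace Monoid.CoprodI

namespace NeWord

variable {ι : Type*} {M : ι → Type*} [∀ i, Monoid (M i)]

theorem fst_eq_of_prod_eq {i j k l : ι} {w : NeWord M i j} {w' : NeWord M k l}
    (h : w.prod = w'.prod) : i = k := by
  classical
  have hw : w.toWord = w'.toWord := Word.equiv.symm.injective h
  have := congrArg (fun v : Word M => v.toList.head?) hw
  simp only [toWord, toList_head?, Option.some.injEq] at this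
  exact congrArg Sigma.fst this

theorem prod_eq_of_head_or_exists_tail {i j : ι} (w : NeWord M i j) :
    (i = j ∧ w.prod = of w.head) ∨
      ∃ k, ∃ (_ : i ≠ k) (w' : NeWord M k j), w.prod = of w.head * w'.prod := by
  induction w with
  | singleton x hx => exact Or.inl ⟨rfl, prod_singleton x hx⟩
  | append w₁ hne w₂ ih₁ _ =>
    right
    rcases ih₁ with ⟨rfl, h⟩ | ⟨k, hk, w', h⟩
    · exact ⟨_, hne, w₂, by rw [append_prod, h, append_head]⟩
    · exact ⟨k, hk, w'.append hne w₂, by rw [append_prod, append_prod, h, append_head, mul_assoc]⟩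

end NeWord

open NeWord in
theorem center_eq_bot {ι : Type*} {G : ι → Type*} [∀ i, Group (G i)] [Nontrivial ι]
    [∀ i, Nontrivial (G i)] : Subgroup.center (CoprodI G) = ⊥ := by
  classical
  refine (Subgroup.eq_bot_iff_forall _).2 fun g hg => by_contra fun hne => ?_
  obtain ⟨i, j, w, hw⟩ := of_word (Word.equiv g) (by
    rwa [Ne, ← Word.equiv.symm.injective.eq_iff, Word.equiv.symm_apply_apply])
  replace hw : w.prod = g := by rw [NeWord.prod, hw]; exact Word.equiv.symm_apply_apply g
  subst hw
  have hcomm := Subgroup.mem_center_iff.mp hg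
  by_cases hij : i = j
  · subst hij
    obtain ⟨k, hki⟩ := exists_ne i
    obtain ⟨u, hu⟩ := exists_ne (1 : G k)
    have h : ((singleton u hu).append hki w).prod = (w.append hki.symm (singleton u hu)).prod := by
      simp [hcomm]
    exact hki (fst_eq_of_prod_eq h)
  · obtain ⟨hij', -⟩ | ⟨k, hik, w', hw'⟩ := prod_eq_of_head_or_exists_tail w
    · exact hij hij'
    have hinv : w.head⁻¹ ≠ 1 :=
      inv_ne_one.mpr (w.toWord.ne_one _ (List.mem_of_mem_head? w.toList_head?))
    have h : w'.prod = (w.append (Ne.symm hij) (singleton _ hinv)).prod := by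
      rw [append_prod, prod_singleton, ← hcomm, hw', ← mul_assoc, ← map_mul, inv_mul_cancel,
        map_one, one_mul]
    exact hik (fst_eq_of_prod_eq h).symm

end Monoid.CoprodI

def zmodLift {H : Type*} [Group H] {n : ℕ} (x : H) (hx : x ^ n = 1) :
    Multiplicative (ZMod n) →* H :=
  AddMonoidHom.toMultiplicativeLeft <| ZMod.lift n
    ⟨zmultiplesHom (Additive H) (Additive.ofMul x), by simpa using congrArg Additive.ofMul hx⟩

theorem zmodLift_ofAdd_intCast {H : Type*} [Group H] {n : ℕ} (x : H) (hx : x ^ n = 1) (t : ℤ) :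
    zmodLift x hx (.ofAdd (t : ZMod n)) = x ^ t := by
  simp [zmodLift]

/-- `ℤ/p ∗ ℤ/q`; note that `ZMod 0 = ℤ`. -/
abbrev CyclicFreeProduct (p q : ℕ) : Type :=
  Monoid.CoprodI fun i : Bool => Multiplicative (ZMod (bif i then p else q))

namespace CyclicFreeProduct

open Monoid

variable {p q : ℕ} {H : Type*} [Group H]

def genL (p q : ℕ) : CyclicFreeProduct p q := CoprodI.of (i := true) (.ofAdd 1)

def genR (p q : ℕ) : CyclicFreeProduct p q := CoprodI.of (i := false) (.ofAdd 1)

theorem genL_pow : genL p q ^ p = 1 := by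
  rw [genL, ← map_pow, ← ofAdd_nsmul, nsmul_one, ZMod.natCast_self, ofAdd_zero, map_one]

theorem genR_pow : genR p q ^ q = 1 := by
  rw [genR, ← map_pow, ← ofAdd_nsmul, nsmul_one, ZMod.natCast_self, ofAdd_zero, map_one]

def lift (x y : H) (hx : x ^ p = 1) (hy : y ^ q = 1) : CyclicFreeProduct p q →* H :=
  CoprodI.lift fun
    | true => zmodLift x hx
    | false => zmodLift y hy

section Lift

variable {x y : H} {hx : x ^ p = 1} {hy : y ^ q = 1}

@[simp]
theorem lift_genL : lift x y hx hy (genL p q) = x := by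
  simpa [lift, genL] using zmodLift_ofAdd_intCast x hx 1

@[simp]
theorem lift_genR : lift x y hx hy (genR p q) = y := by
  simpa [lift, genR] using zmodLift_ofAdd_intCast y hy 1

end Lift

theorem surjective_of_mem_range {f : H →* CyclicFreeProduct p q} (hL : genL p q ∈ f.range)
    (hR : genR p q ∈ f.range) : Function.Surjective f := by
  refine fun g => CoprodI.induction_on (motive := (· ∈ f.range)) g f.range.one_mem
    (fun i u => ?_) (fun _ _ => f.range.mul_mem)
  obtain ⟨t, ht⟩ := ZMod.intCast_surjective u.toAdd
  have hu : u = .ofAdd 1 ^ t := by rw [← ofAdd_zsmul, zsmul_one, ht]; rfl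
  rw [hu, map_zpow]
  cases i
  exacts [f.range.zpow_mem hR t, f.range.zpow_mem hL t]

theorem center_eq_bot (hp : p ≠ 1) (hq : q ≠ 1) :
    Subgroup.center (CyclicFreeProduct p q) = ⊥ :=
  have : ∀ i, Nontrivial (Multiplicative (ZMod (bif i then p else q))) := fun i => by
    have := ZMod.nontrivial_iff.mpr (show (bif i then p else q) ≠ 1 by cases i <;> assumption)
    infer_instance
  CoprodI.center_eq_bot

theorem altWord_genL_inv_mul_genR {k n : ℕ} (hn : n = 2 * k) :
    altWord (genL 0 k) ((genL 0 k)⁻¹ * genR 0 k) n = 1 ∧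
      altWord ((genL 0 k)⁻¹ * genR 0 k) (genL 0 k) n = 1 := by
  have hconj := @conj_pow _ _ k (genL 0 k)⁻¹ (genR 0 k)
  rw [inv_inv, genR_pow, mul_one, inv_mul_cancel] at hconj
  rw [hn, altWord_two_mul, altWord_two_mul, mul_inv_cancel_left, genR_pow]
  exact ⟨rfl, hconj⟩

-- The images of `a = (ab)⁻ᵏ δ` and `b = δ⁻¹ (ab)ᵏ⁺¹` under `δ ↦ genL`, `ab ↦ genR`.
theorem altWord_genR_pow_inv_mul_genL {k n : ℕ} (hn : n = 2 * k + 1) :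
    altWord ((genR 2 n ^ k)⁻¹ * genL 2 n) ((genL 2 n)⁻¹ * genR 2 n ^ (k + 1)) n = genL 2 n ∧
      altWord ((genL 2 n)⁻¹ * genR 2 n ^ (k + 1)) ((genR 2 n ^ k)⁻¹ * genL 2 n) n =
        genL 2 n := by
  subst hn
  set U := genL 2 (2 * k + 1)
  set V := genR 2 (2 * k + 1)
  have hU : U⁻¹ = U := inv_eq_of_mul_eq_one_left (by rw [← sq]; exact genL_pow)
  have hconj := @conj_pow _ _ k U⁻¹ V
  rw [inv_inv] at hconj
  constructor
  · rw [altWord_two_mul_add_one]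
    group
  · have hyx : U⁻¹ * V ^ (k + 1) * ((V ^ k)⁻¹ * U) = U⁻¹ * V * U := by group
    rw [altWord_two_mul_add_one, hyx, hconj]
    calc U⁻¹ * V ^ k * U * (U⁻¹ * V ^ (k + 1)) = U⁻¹ * V ^ (2 * k + 1) := by group
      _ = U := by rw [genR_pow, mul_one, hU]

end CyclicFreeProduct

theorem Subgroup.normal_of_le_center {G : Type*} [Group G] {N : Subgroup G}
    (h : N ≤ Subgroup.center G) : N.Normal :=
  ⟨fun n hn g => by rw [(Subgroup.mem_center_iff.mp (h hn) g), mul_inv_cancel_right]; exact hn⟩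

theorem Subgroup.center_le_of_surjective_of_comp_eq_mk' {A Q : Type*} [Group A] [Group Q]
    {N : Subgroup A} [N.Normal] (hQ : Subgroup.center Q = ⊥) {φ : A →* Q}
    (hφ : Function.Surjective φ) {ψ : Q →* A ⧸ N} (hψ : ψ.comp φ = QuotientGroup.mk' N) :
    Subgroup.center A ≤ N := by
  intro c hc
  have hφc : φ c ∈ Subgroup.center Q := Subgroup.mem_center_iff.mpr fun q => by
    obtain ⟨g, rfl⟩ := hφ q
    rw [← map_mul, ← map_mul, Subgroup.mem_center_iff.mp hc g]
  rw [hQ, Subgroup.mem_bot] at hφc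
  rw [← QuotientGroup.eq_one_iff, ← QuotientGroup.mk'_apply, ← hψ, MonoidHom.comp_apply, hφc,
    map_one]

namespace DihedralArtin

variable {m : ℕ}

local notation "a" => dihedralA m
local notation "b" => dihedralB m

theorem garsideElt_eq_altWord : garsideElt m = altWord a b m := rfl

theorem altWord_dihedralA_dihedralB : altWord a b m = altWord b a m := by
  have hrel : braidWord m true false * (braidWord m false true)⁻¹ ∈
      artinRels (fun s t : Bool => if s = t then 1 else (m : ℕ∞)) :=
    ⟨true, false, by decide, m, rfl, rfl⟩
  have h := PresentedGroup.mk_eq_one_iff.mpr (Subgroup.subset_normalClosure hrel)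
  rwa [map_mul, map_inv, mul_inv_eq_one, braidWord_eq_altWord, braidWord_eq_altWord,
    map_altWord, map_altWord] at h

section Lift

variable {G : Type*} [Group G]

def lift (x y : G) (h : altWord x y m = altWord y x m) : DihedralArtin m →* G :=
  PresentedGroup.toGroup (f := fun s => cond s x y) <| by
    rintro r ⟨s, t, hst, k, hk, rfl⟩
    obtain rfl : k = m := by simpa [hst] using hk.symm
    rw [map_mul, map_inv, mul_inv_eq_one, braidWord_eq_altWord, braidWord_eq_altWord,
      map_altWord, map_altWord]
    cases s <;> cases t <;> simp_all

variable {x y : G} {h : altWord x y m = altWord y x m}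

@[simp]
theorem lift_dihedralA : lift x y h a = x := PresentedGroup.toGroup.of _

@[simp]
theorem lift_dihedralB : lift x y h b = y := PresentedGroup.toGroup.of _

theorem hom_ext {f g : DihedralArtin m →* G} (ha : f a = g a) (hb : f b = g b) : f = g :=
  PresentedGroup.ext fun s => by cases s <;> assumption

end Lift

theorem garsideElt_eq_pow_of_eq_two_mul {k : ℕ} (hk : m = 2 * k) :
    garsideElt m = (a * b) ^ k ∧ garsideElt m = (b * a) ^ k := by
  subst hk
  exact ⟨altWord_two_mul _ _ k, altWord_dihedralA_dihedralB.trans (altWord_two_mul _ _ k)⟩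

theorem garsideElt_eq_of_eq_two_mul_add_one {k : ℕ} (hk : m = 2 * k + 1) :
    garsideElt m = (a * b) ^ k * a := by
  subst hk
  exact altWord_two_mul_add_one _ _ k

theorem garsideElt_sq_eq_pow_of_odd (hm : Odd m) :
    garsideElt m ^ 2 = (a * b) ^ m ∧ garsideElt m ^ 2 = (b * a) ^ m := by
  have hrel := altWord_dihedralA_dihedralB (m := m)
  rw [sq, garsideElt_eq_altWord]
  constructor
  · nth_rw 2 [hrel]
    exact altWord_mul_altWord_of_odd _ _ hm
  · nth_rw 1 [hrel]
    exact altWord_mul_altWord_of_odd _ _ hm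

theorem mem_center_of_eq_pow {z : DihedralArtin m} {N : ℕ} (hab : z = (a * b) ^ N)
    (hba : z = (b * a) ^ N) : z ∈ Subgroup.center (DihedralArtin m) := by
  subst hab
  have hgen : (⊤ : Subgroup (DihedralArtin m)) ≤ Subgroup.centralizer {(a * b) ^ N} := by
    rw [← PresentedGroup.closure_range_of, Subgroup.closure_le]
    rintro _ ⟨s, rfl⟩
    rw [SetLike.mem_coe, Subgroup.mem_centralizer_singleton_iff]
    cases s
    · change b * _ = _ * b
      rw [(SemiconjBy.pow_right (mul_assoc b a b).symm N).eq, hba]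
    · change a * _ = _ * a
      rw [hba, (SemiconjBy.pow_right (mul_assoc a b a).symm N).eq, hba]
  exact Subgroup.mem_center_iff.mpr fun g =>
    Subgroup.mem_centralizer_singleton_iff.mp (hgen (Subgroup.mem_top g))

theorem eq_zero_of_zpow_eq_one {z : DihedralArtin m} {N : ℕ} (hN : N ≠ 0)
    (hab : z = (a * b) ^ N) {n : ℤ} (hn : z ^ n = 1) : n = 0 := by
  let length : DihedralArtin m →* Multiplicative ℤ := lift (.ofAdd 1) (.ofAdd 1) rfl
  have h := congrArg (fun g => (length g).toAdd) hn
  simp only [hab, map_zpow, map_pow, map_mul, length, lift_dihedralA, lift_dihedralB, toAdd_zpow,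
    toAdd_pow, toAdd_mul, toAdd_ofAdd, map_one, toAdd_one, smul_eq_mul, nsmul_eq_mul] at h
  simpa [hN] using h

open CyclicFreeProduct QuotientGroup in
theorem center_le_zpowers_garsideElt_of_eq_two_mul {k : ℕ} (hk : m = 2 * k) (hk1 : k ≠ 1) :
    Subgroup.center (DihedralArtin m) ≤ Subgroup.zpowers (garsideElt m) := by
  obtain ⟨hab, hba⟩ := garsideElt_eq_pow_of_eq_two_mul hk
  have := Subgroup.normal_of_le_center (Subgroup.zpowers_le.mpr (mem_center_of_eq_pow hab hba))
  have himg := altWord_genL_inv_mul_genR hk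
  let φ : DihedralArtin m →* CyclicFreeProduct 0 k := lift _ _ (himg.1.trans himg.2.symm)
  let ψ : CyclicFreeProduct 0 k →* DihedralArtin m ⧸ Subgroup.zpowers (garsideElt m) :=
    CyclicFreeProduct.lift (a : DihedralArtin m ⧸ _) (a * b : DihedralArtin m) (pow_zero _) <| by
      rw [← mk_pow, ← hab, eq_one_iff]; exact Subgroup.mem_zpowers _
  refine Subgroup.center_le_of_surjective_of_comp_eq_mk'
    (center_eq_bot (by decide) hk1) (φ := φ) ?_ (ψ := ψ) ?_
  · exact surjective_of_mem_range ⟨a, lift_dihedralA⟩ ⟨a * b, by simp [φ]⟩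
  · refine hom_ext ?_ ?_ <;> simp [φ, ψ]

open CyclicFreeProduct QuotientGroup in
theorem center_le_zpowers_garsideElt_sq_of_eq_two_mul_add_one {k : ℕ} (hk : m = 2 * k + 1)
    (hk0 : k ≠ 0) : Subgroup.center (DihedralArtin m) ≤ Subgroup.zpowers (garsideElt m ^ 2) := by
  obtain ⟨hab, hba⟩ := garsideElt_sq_eq_pow_of_odd (m := m) ⟨k, hk⟩
  have := Subgroup.normal_of_le_center (Subgroup.zpowers_le.mpr (mem_center_of_eq_pow hab hba))
  have himg := altWord_genR_pow_inv_mul_genL hk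
  let φ : DihedralArtin m →* CyclicFreeProduct 2 m := lift _ _ (himg.1.trans himg.2.symm)
  let ψ : CyclicFreeProduct 2 m →* DihedralArtin m ⧸ Subgroup.zpowers (garsideElt m ^ 2) :=
    CyclicFreeProduct.lift (garsideElt m : DihedralArtin m ⧸ _) (a * b : DihedralArtin m)
      (by rw [← mk_pow, eq_one_iff]; exact Subgroup.mem_zpowers _)
      (by rw [← mk_pow, ← hab, eq_one_iff]; exact Subgroup.mem_zpowers _)
  refine Subgroup.center_le_of_surjective_of_comp_eq_mk'
    (center_eq_bot (by decide) (by omega)) (φ := φ) ?_ (ψ := ψ) ?_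
  · refine surjective_of_mem_range ⟨garsideElt m, ?_⟩ ⟨a * b, ?_⟩
    · simpa [φ, garsideElt_eq_altWord, map_altWord] using himg.1
    · simp [φ]; group
  · have hδ := garsideElt_eq_of_eq_two_mul_add_one hk
    refine hom_ext (by simp [φ, ψ, hδ]) ?_
    simp [φ, ψ, hδ]
    group

end DihedralArtin

/-- The centre of the dihedral Artin group with coefficient `2 < m < ∞` is infinite
cyclic, generated by the Garside element `δ` if `m` is even and by `δ²` if `m` is odd. -/
theorem centre_dihedral_artin (m : ℕ) (hm : 2 < m) :
    Subgroup.center (DihedralArtin m) =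
        Subgroup.zpowers (if Even m then garsideElt m else (garsideElt m) ^ 2) ∧
      ∀ n : ℤ, (if Even m then garsideElt m else (garsideElt m) ^ 2) ^ n = 1 → n = 0 := by
  set z := if Even m then garsideElt m else garsideElt m ^ 2
  obtain ⟨N, hN, hab, hba, hle⟩ : ∃ N ≠ 0, z = (dihedralA m * dihedralB m) ^ N ∧
      z = (dihedralB m * dihedralA m) ^ N ∧
      Subgroup.center (DihedralArtin m) ≤ Subgroup.zpowers z := by
    rcases Nat.even_or_odd' m with ⟨k, hk | hk⟩
    · have hz : z = garsideElt m := if_pos ⟨k, by omega⟩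
      obtain ⟨hab, hba⟩ := DihedralArtin.garsideElt_eq_pow_of_eq_two_mul hk
      exact ⟨k, by omega, hz.trans hab, hz.trans hba,
        hz ▸ DihedralArtin.center_le_zpowers_garsideElt_of_eq_two_mul hk (by omega)⟩
    · have hz : z = garsideElt m ^ 2 := if_neg (Nat.not_even_iff_odd.mpr ⟨k, hk⟩)
      obtain ⟨hab, hba⟩ := DihedralArtin.garsideElt_sq_eq_pow_of_odd ⟨k, hk⟩
      exact ⟨m, by omega, hz.trans hab, hz.trans hba,
        hz ▸ DihedralArtin.center_le_zpowers_garsideElt_sq_of_eq_two_mul_add_one hk (by omega)⟩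
  exact ⟨le_antisymm hle (Subgroup.zpowers_le.mpr (DihedralArtin.mem_center_of_eq_pow hab hba)),
    fun n => DihedralArtin.eq_zero_of_zpow_eq_one hN hab⟩
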